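/- Let S be the N×N matrix with entries S_{ij} = sinc(√M ‖x_i − x_j‖) where x_1, ..., x_N are i.i.d. standard Gaussian points in R^3. Then E[(1/N) Tr S²] = 1 + (N−1) e^{−2M} sinh(2M)/(2M). In particular, if N, M → ∞ with N/M = b_0 fixed, then E[(1/N) Tr S²] → 1 + b_0/4. -/

import Mathlib

open MeasureTheory Real Filter
open scoped ENNReal NNReal

noncomputable def sinc (x : ℝ) : ℝ := if x = 0 then 1 else Real.sin x / x

noncomputable def stdGauss3 : Measure (EuclideanSpace ℝ (Fin 3)) :=
  volume.withDensity fun x => ENNReal.ofReal ((2 * π) ^ (-(3 : ℝ) / 2) * Real.exp (-‖x‖ ^ 2 / 2))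

namespace TrSsq

abbrev V : Type := EuclideanSpace ℝ (Fin 3)

lemma sinc_zero : _root_.sinc 0 = 1 := by simp [_root_.sinc]

lemma abs_sinc_le_one (x : ℝ) : |_root_.sinc x| ≤ 1 := by
  unfold _root_.sinc
  split_ifs with h
  · simp
  · rw [abs_div, div_le_one (abs_pos.2 h)]
    exact Real.abs_sin_le_abs

lemma sinc_sq_le_one (x : ℝ) : _root_.sinc x ^ 2 ≤ 1 := by
  have := abs_sinc_le_one x
  nlinarith [abs_nonneg (_root_.sinc x), sq_abs (_root_.sinc x)]

lemma sinc_sq_nonneg (x : ℝ) : 0 ≤ _root_.sinc x ^ 2 := sq_nonneg _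

lemma measurable_sinc : Measurable _root_.sinc := by
  unfold _root_.sinc
  exact Measurable.ite (measurableSet_singleton 0) measurable_const
    (Real.measurable_sin.div measurable_id)

/-- the Gaussian density -/
noncomputable def g (x : V) : ℝ := (2 * π) ^ (-(3 : ℝ) / 2) * Real.exp (-‖x‖ ^ 2 / 2)

lemma g_nonneg (x : V) : 0 ≤ g x := by
  unfold g; positivity

lemma continuous_g : Continuous g := by
  unfold g
  exact continuous_const.mul (Real.continuous_exp.comp (by fun_prop))

lemma stdGauss3_eq : stdGauss3 = volume.withDensity fun x => ENNReal.ofReal (g x) := rfl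

lemma finrank_V : Module.finrank ℝ V = 3 := finrank_euclideanSpace_fin

lemma integrable_gauss {b : ℝ} (hb : 0 < b) :
    Integrable (fun x : V => Real.exp (-b * ‖x‖ ^ 2)) volume := by
  have h := (GaussianFourier.integrable_cexp_neg_mul_sq_norm_add (V := V)
    (b := (b : ℂ)) (by simpa using hb) 0 0).norm
  refine h.congr (Eventually.of_forall fun x => ?_)
  simp [Complex.norm_exp, ← Complex.ofReal_pow]

lemma integral_gauss {b : ℝ} (hb : 0 < b) :
    ∫ x : V, Real.exp (-b * ‖x‖ ^ 2) = (π / b) ^ ((3 : ℝ) / 2) := by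
  rw [GaussianFourier.integral_rexp_neg_mul_sq_norm hb, finrank_V]
  norm_num

lemma integrable_g : Integrable g volume := by
  have : Integrable (fun x : V => Real.exp (-(1/2) * ‖x‖ ^ 2)) volume :=
    integrable_gauss (by norm_num)
  refine (this.const_mul ((2 * π) ^ (-(3 : ℝ) / 2))).congr
    (Eventually.of_forall fun x => ?_)
  unfold g; ring_nf

lemma integral_g : ∫ x : V, g x = 1 := by
  unfold g
  rw [MeasureTheory.integral_const_mul]
  have : ∀ x : V, Real.exp (-‖x‖ ^ 2 / 2) = Real.exp (-(1/2) * ‖x‖ ^ 2) := by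
    intro x; ring_nf
  rw [integral_congr_ae (Eventually.of_forall this), integral_gauss (by norm_num)]
  have hπ : (0 : ℝ) < 2 * π := by positivity
  have : (π : ℝ) / (1/2) = 2 * π := by ring
  rw [this, ← Real.rpow_add hπ]
  norm_num

instance : IsProbabilityMeasure stdGauss3 := by
  constructor
  rw [stdGauss3_eq, withDensity_apply _ MeasurableSet.univ, Measure.restrict_univ,
    ← MeasureTheory.ofReal_integral_eq_lintegral_ofReal integrable_g
      (Eventually.of_forall g_nonneg), integral_g]
  simp

lemma integral_stdGauss3 (f : V → ℝ) :
    ∫ x, f x ∂stdGauss3 = ∫ x, g x * f x := by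
  rw [stdGauss3_eq]
  have hmeas : Measurable (fun x : V => (g x).toNNReal) :=
    continuous_g.measurable.real_toNNReal
  have : (fun x : V => ENNReal.ofReal (g x)) = fun x => ((g x).toNNReal : ℝ≥0∞) := rfl
  rw [this, integral_withDensity_eq_integral_smul hmeas]
  refine integral_congr_ae (Eventually.of_forall fun x => ?_)
  simp [NNReal.smul_def, Real.coe_toNNReal _ (g_nonneg x)]


lemma integrable_cos_gauss (c : ℝ) :
    Integrable (fun r : ℝ => Real.cos (c * r) * Real.exp (-r ^ 2 / 4)) volume := by
  have hg : Integrable (fun r : ℝ => Real.exp (-(1/4) * r ^ 2)) volume :=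
    integrable_exp_neg_mul_sq (by norm_num)
  refine hg.mono' ?_ (Eventually.of_forall fun r => ?_)
  · exact ((Real.continuous_cos.comp (continuous_const.mul continuous_id)).mul
      (Real.continuous_exp.comp (by fun_prop))).aestronglyMeasurable
  · rw [Real.norm_eq_abs, abs_mul, abs_of_pos (Real.exp_pos _)]
    have h1 : |Real.cos (c * r)| ≤ 1 := Real.abs_cos_le_one _
    have : Real.exp (-r ^ 2 / 4) = Real.exp (-(1/4) * r ^ 2) := by ring_nf
    rw [this]
    nlinarith [Real.exp_pos (-(1/4) * r ^ 2)]

lemma integral_cos_gauss (c : ℝ) :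
    ∫ r : ℝ, Real.cos (c * r) * Real.exp (-r ^ 2 / 4) = 2 * Real.sqrt π * Real.exp (-c ^ 2) := by
  have hb : (0:ℝ) < (1/4 : ℂ).re := by norm_num
  have h := GaussianFourier.integral_cexp_neg_mul_sq_norm_add (V := ℝ)
    (b := (1/4 : ℂ)) hb ((c : ℂ) * Complex.I) (1 : ℝ)
  have hint := GaussianFourier.integrable_cexp_neg_mul_sq_norm_add (V := ℝ)
    (b := (1/4 : ℂ)) hb ((c : ℂ) * Complex.I) (1 : ℝ)
  have hre := congrArg Complex.re h
  have h2 : ∫ v : ℝ, (Complex.exp (-(1/4 : ℂ) * (‖v‖ : ℂ) ^ 2 + (c : ℂ) * Complex.I * ((inner ℝ (1:ℝ) v : ℝ) : ℂ))).re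
      = (∫ v : ℝ, Complex.exp (-(1/4 : ℂ) * (‖v‖ : ℂ) ^ 2 + (c : ℂ) * Complex.I * ((inner ℝ (1:ℝ) v : ℝ) : ℂ))).re := by
    simpa using integral_re hint
  rw [← h2] at hre
  have hL : ∀ v : ℝ,
      (Complex.exp (-(1/4 : ℂ) * (‖v‖ : ℂ) ^ 2 + (c : ℂ) * Complex.I * ((inner ℝ (1:ℝ) v : ℝ) : ℂ))).re
        = Real.cos (c * v) * Real.exp (-v ^ 2 / 4) := by
    intro v
    have h1 : (inner ℝ (1:ℝ) v : ℝ) = v := by simp [real_inner_comm]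
    have hz_re : (-(1/4 : ℂ) * (‖v‖ : ℂ) ^ 2 + (c : ℂ) * Complex.I * ((inner ℝ (1:ℝ) v : ℝ) : ℂ)).re = -v ^ 2 / 4 := by
      simp [h1, ← Complex.ofReal_pow, Real.norm_eq_abs, sq_abs]
      ring
    have hz_im : (-(1/4 : ℂ) * (‖v‖ : ℂ) ^ 2 + (c : ℂ) * Complex.I * ((inner ℝ (1:ℝ) v : ℝ) : ℂ)).im = c * v := by
      simp [h1, ← Complex.ofReal_pow, Real.norm_eq_abs]
    rw [Complex.exp_re, hz_re, hz_im, mul_comm]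
  have hRe : ((↑π / (1/4 : ℂ)) ^ ((Module.finrank ℝ ℝ : ℂ) / 2) *
      Complex.exp (((c:ℂ) * Complex.I) ^ 2 * ((‖(1:ℝ)‖ : ℝ) : ℂ) ^ 2 / (4 * (1/4)))).re
      = 2 * Real.sqrt π * Real.exp (-c ^ 2) := by
    have e1 : ((c:ℂ) * Complex.I) ^ 2 * ((‖(1:ℝ)‖ : ℝ) : ℂ) ^ 2 / (4 * (1/4 : ℂ)) = ((-c ^ 2 : ℝ) : ℂ) := by
      simp [mul_pow, Complex.I_sq]
    have e2 : (↑π / (1/4 : ℂ)) = ((4 * π : ℝ) : ℂ) := by push_cast; ring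
    have e3 : ((Module.finrank ℝ ℝ : ℂ)) / 2 = (((1/2 : ℝ)) : ℂ) := by
      rw [Module.finrank_self]
      norm_num
    rw [e1, e2, e3, ← Complex.ofReal_cpow (by positivity), ← Complex.ofReal_exp,
      ← Complex.ofReal_mul, Complex.ofReal_re, ← Real.sqrt_eq_rpow,
      Real.sqrt_mul (by norm_num : (0:ℝ) ≤ 4),
      show Real.sqrt 4 = 2 by rw [show (4:ℝ) = 2^2 by norm_num, Real.sqrt_sq (by norm_num)]]
  calc ∫ r : ℝ, Real.cos (c * r) * Real.exp (-r ^ 2 / 4)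
      = ∫ v : ℝ, (Complex.exp (-(1/4 : ℂ) * (‖v‖ : ℂ) ^ 2 + (c : ℂ) * Complex.I * ((inner ℝ (1:ℝ) v : ℝ) : ℂ))).re :=
        integral_congr_ae (Eventually.of_forall fun v => (hL v).symm)
    _ = 2 * Real.sqrt π * Real.exp (-c ^ 2) := by rw [hre, hRe]

lemma integrable_gauss1 : Integrable (fun r : ℝ => Real.exp (-r ^ 2 / 4)) volume := by
  refine (integrable_exp_neg_mul_sq (by norm_num : (0:ℝ) < 1/4)).congr
    (Eventually.of_forall fun r => ?_)
  ring_nf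

lemma integral_gauss1 : ∫ r : ℝ, Real.exp (-r ^ 2 / 4) = 2 * Real.sqrt π := by
  have h : ∀ r : ℝ, Real.exp (-r ^ 2 / 4) = Real.exp (-(1/4) * r ^ 2) := fun r => by ring_nf
  rw [integral_congr_ae (Eventually.of_forall h), integral_gaussian,
    show π / (1/4 : ℝ) = 4 * π by ring, Real.sqrt_mul (by norm_num : (0:ℝ) ≤ 4),
    show Real.sqrt 4 = 2 by rw [show (4:ℝ) = 2^2 by norm_num, Real.sqrt_sq (by norm_num)]]

lemma integrable_sin_gauss (a : ℝ) :
    Integrable (fun r : ℝ => Real.sin (a * r) ^ 2 * Real.exp (-r ^ 2 / 4)) volume := by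
  refine integrable_gauss1.mono' ?_ (Eventually.of_forall fun r => ?_)
  · exact (((Real.continuous_sin.comp (continuous_const.mul continuous_id)).pow 2).mul
      (Real.continuous_exp.comp (by fun_prop))).aestronglyMeasurable
  · rw [Real.norm_eq_abs, abs_mul, abs_of_pos (Real.exp_pos _)]
    have h1 : Real.sin (a * r) ^ 2 ≤ 1 := Real.sin_sq_le_one _
    have h2 : (0:ℝ) ≤ Real.sin (a * r) ^ 2 := sq_nonneg _
    rw [_root_.abs_of_nonneg h2]
    nlinarith [Real.exp_pos (-r ^ 2 / 4)]

lemma integral_line_sin_gauss (a : ℝ) :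
    ∫ r : ℝ, Real.sin (a * r) ^ 2 * Real.exp (-r ^ 2 / 4)
      = Real.sqrt π * (1 - Real.exp (-(4 * a ^ 2))) := by
  have h : ∀ r : ℝ, Real.sin (a * r) ^ 2 * Real.exp (-r ^ 2 / 4)
      = (1/2) * Real.exp (-r ^ 2 / 4) - (1/2) * (Real.cos ((2*a) * r) * Real.exp (-r ^ 2 / 4)) := by
    intro r
    rw [Real.sin_sq_eq_half_sub]
    have : 2 * (a * r) = (2 * a) * r := by ring
    rw [this]
    ring
  rw [integral_congr_ae (Eventually.of_forall h),
    integral_sub (integrable_gauss1.const_mul _) ((integrable_cos_gauss (2*a)).const_mul _),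
    integral_const_mul, integral_const_mul, integral_gauss1, integral_cos_gauss]
  have : (2 * a) ^ 2 = 4 * a ^ 2 := by ring
  rw [this]
  ring

lemma integral_Ioi_sin_gauss (a : ℝ) :
    ∫ r in Set.Ioi (0:ℝ), Real.sin (a * r) ^ 2 * Real.exp (-r ^ 2 / 4)
      = Real.sqrt π / 2 * (1 - Real.exp (-(4 * a ^ 2))) := by
  set u : ℝ → ℝ := fun r => Real.sin (a * r) ^ 2 * Real.exp (-r ^ 2 / 4) with hu_def
  have hu : Integrable u volume := integrable_sin_gauss a
  have hsplit := intervalIntegral.integral_Iic_add_Ioi (b := (0:ℝ)) hu.integrableOn hu.integrableOn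
  have heven : ∀ r : ℝ, u (-r) = u r := by
    intro r
    simp only [hu_def]
    rw [mul_neg, Real.sin_neg, neg_pow, neg_sq]
    ring_nf
  have hIic : ∫ r in Set.Iic (0:ℝ), u r = ∫ r in Set.Ioi (0:ℝ), u r := by
    have := integral_comp_neg_Ioi (0:ℝ) u
    rw [neg_zero] at this
    rw [← this]
    exact integral_congr_ae (Eventually.of_forall fun r => (heven r).symm) |>.symm
  have hline : ∫ r : ℝ, u r = Real.sqrt π * (1 - Real.exp (-(4 * a ^ 2))) :=
    integral_line_sin_gauss a
  rw [hline, hIic] at hsplit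
  linarith


lemma volume_unit_ball_V : (volume (Metric.ball (0:V) 1)).toReal = 4/3 * π := by
  rw [EuclideanSpace.volume_ball]
  have hcard : Fintype.card (Fin 3) = 3 := Fintype.card_fin 3
  rw [hcard]
  have hG : Real.Gamma ((3:ℝ)/2 + 1) = 3/4 * Real.sqrt π := by
    rw [Real.Gamma_add_one (by norm_num)]
    have : Real.Gamma ((3:ℝ)/2) = (1/2) * Real.Gamma (1/2) := by
      rw [show (3:ℝ)/2 = 1/2 + 1 by norm_num, Real.Gamma_add_one (by norm_num)]
    rw [this, Real.Gamma_one_half_eq]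
    ring
  have hsq : Real.sqrt π ≠ 0 := (Real.sqrt_pos.2 Real.pi_pos).ne'
  have hval : Real.sqrt π ^ 3 / Real.Gamma ((3:ℕ) / 2 + 1) = 4/3 * π := by
    rw [show ((3:ℕ):ℝ) / 2 + 1 = (3:ℝ)/2 + 1 by norm_num, hG]
    rw [show Real.sqrt π ^ 3 = π * Real.sqrt π by
      rw [pow_succ, sq, Real.mul_self_sqrt Real.pi_nonneg]]
    field_simp
  rw [hval, show ENNReal.ofReal (1:ℝ) = 1 by simp, one_pow, one_mul,
    ENNReal.toReal_ofReal (by positivity)]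

lemma radial_integral {M : ℝ} (hM : 0 < M) :
    ∫ z : V, _root_.sinc (Real.sqrt M * ‖z‖) ^ 2 * Real.exp (-‖z‖ ^ 2 / 4)
      = 2 * π * Real.sqrt π * (1 - Real.exp (-(4 * M))) / M := by
  have h := MeasureTheory.integral_fun_norm_addHaar (volume : Measure V)
    (fun r : ℝ => _root_.sinc (Real.sqrt M * r) ^ 2 * Real.exp (-r ^ 2 / 4))
  rw [finrank_euclideanSpace_fin] at h
  rw [show (∫ z : V, _root_.sinc (Real.sqrt M * ‖z‖) ^ 2 * Real.exp (-‖z‖ ^ 2 / 4))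
      = ∫ x : V, (fun r : ℝ => _root_.sinc (Real.sqrt M * r) ^ 2 * Real.exp (-r ^ 2 / 4)) ‖x‖ from rfl, h]
  have hsM : (0:ℝ) < Real.sqrt M := Real.sqrt_pos.2 hM
  have hIoi : ∫ y in Set.Ioi (0:ℝ), y ^ (3-1) • ((fun r : ℝ => _root_.sinc (Real.sqrt M * r) ^ 2 * Real.exp (-r ^ 2 / 4)) y)
      = (1/M) * (Real.sqrt π / 2 * (1 - Real.exp (-(4 * M)))) := by
    have hcong : ∀ y ∈ Set.Ioi (0:ℝ), y ^ (3-1) • ((fun r : ℝ => _root_.sinc (Real.sqrt M * r) ^ 2 * Real.exp (-r ^ 2 / 4)) y)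
        = (1/M) * (Real.sin (Real.sqrt M * y) ^ 2 * Real.exp (-y ^ 2 / 4)) := by
      intro y hy
      have hy0 : (0:ℝ) < y := hy
      have ha : Real.sqrt M * y ≠ 0 := by positivity
      simp only [smul_eq_mul, _root_.sinc, if_neg ha]
      rw [div_pow, mul_pow, Real.sq_sqrt hM.le]
      have hMne : M ≠ 0 := hM.ne'
      have hyne : y ≠ 0 := hy0.ne'
      field_simp
    rw [MeasureTheory.setIntegral_congr_fun measurableSet_Ioi hcong,
      integral_const_mul, integral_Ioi_sin_gauss, Real.sq_sqrt hM.le]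
  rw [hIoi, measureReal_def, volume_unit_ball_V, nsmul_eq_mul, smul_eq_mul]
  have hMne : M ≠ 0 := hM.ne'
  field_simp
  ring

lemma norm_identity (x z : V) :
    ‖x‖ ^ 2 + ‖x - z‖ ^ 2 = 2 * ‖x - (2⁻¹:ℝ) • z‖ ^ 2 + 2⁻¹ * ‖z‖ ^ 2 := by
  have hp := parallelogram_law_with_norm ℝ (x - (2⁻¹:ℝ) • z) ((2⁻¹:ℝ) • z)
  have h1 : x - (2⁻¹:ℝ) • z + (2⁻¹:ℝ) • z = x := by abel
  have h2 : x - (2⁻¹:ℝ) • z - (2⁻¹:ℝ) • z = x - z := by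
    rw [sub_sub, ← add_smul]
    norm_num
  have h3 : ‖(2⁻¹:ℝ) • z‖ = 2⁻¹ * ‖z‖ := by
    rw [norm_smul]
    simp
  rw [h1, h2, h3] at hp
  linear_combination hp

lemma integral_g_mul_g_sub (z : V) :
    ∫ x : V, g x * g (x - z)
      = ((2*π) ^ (-(3:ℝ)/2))^2 * π ^ ((3:ℝ)/2) * Real.exp (-‖z‖^2/4) := by
  have hpt : ∀ x : V, g x * g (x - z)
      = ((2*π) ^ (-(3:ℝ)/2))^2 * Real.exp (-‖z‖^2/4) * Real.exp (-1 * ‖x - (2⁻¹:ℝ) • z‖^2) := by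
    intro x
    have hnorm := norm_identity x z
    unfold g
    have h4 : ((2*π:ℝ) ^ (-(3:ℝ)/2))^2 * Real.exp (-‖z‖^2/4) * Real.exp (-1 * ‖x - (2⁻¹:ℝ) • z‖^2)
        = ((2*π:ℝ) ^ (-(3:ℝ)/2) * (2*π:ℝ) ^ (-(3:ℝ)/2)) * Real.exp (-‖z‖^2/4 + -1 * ‖x - (2⁻¹:ℝ) • z‖^2) := by
      rw [Real.exp_add]; ring
    rw [h4, mul_mul_mul_comm, ← Real.exp_add]
    congr 1
    rw [Real.exp_eq_exp]
    linarith
  rw [integral_congr_ae (Eventually.of_forall hpt), integral_const_mul]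
  have ht : ∫ x : V, Real.exp (-1 * ‖x - (2⁻¹:ℝ) • z‖^2) = ∫ x : V, Real.exp (-1 * ‖x‖^2) := by
    have := integral_add_right_eq_self (μ := (volume : Measure V))
      (fun y => Real.exp (-1 * ‖y‖^2)) (-((2⁻¹:ℝ) • z))
    simpa [sub_eq_add_neg] using this
  rw [ht, integral_gauss (by norm_num : (0:ℝ) < 1)]
  rw [div_one]
  ring

lemma const_final :
    ((2*π:ℝ) ^ (-(3:ℝ)/2))^2 * π ^ ((3:ℝ)/2) * (2 * π * Real.sqrt π) = 1/4 := by
  have h2π : (0:ℝ) < 2 * π := by positivity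
  have e1 : ((2*π:ℝ) ^ (-(3:ℝ)/2))^2 = ((2*π:ℝ) ^ (3:ℕ))⁻¹ := by
    rw [← Real.rpow_natCast ((2*π:ℝ) ^ (-(3:ℝ)/2)) 2, ← Real.rpow_mul h2π.le]
    rw [show -(3:ℝ)/2 * (2:ℕ) = -(3:ℝ) by push_cast; ring]
    rw [Real.rpow_neg h2π.le, ← Real.rpow_natCast (2*π) 3]
    norm_num
  have e2 : (π:ℝ) ^ ((3:ℝ)/2) * Real.sqrt π = π ^ 2 := by
    rw [Real.sqrt_eq_rpow, ← Real.rpow_add Real.pi_pos]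
    rw [show (3:ℝ)/2 + 1/2 = ((2:ℕ):ℝ) by norm_num, Real.rpow_natCast]
  calc ((2*π:ℝ) ^ (-(3:ℝ)/2))^2 * π ^ ((3:ℝ)/2) * (2 * π * Real.sqrt π)
      = ((2*π:ℝ) ^ (3:ℕ))⁻¹ * (π ^ ((3:ℝ)/2) * Real.sqrt π) * (2 * π) := by
        rw [e1]; ring
    _ = ((2*π:ℝ) ^ (3:ℕ))⁻¹ * π ^ 2 * (2 * π) := by rw [e2]
    _ = 1/4 := by
        have : (2*π:ℝ) ^ (3:ℕ) = 8 * π ^ 3 := by ring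
        rw [this]
        field_simp
        ring

/-- the skew equiv `(x, z) ↦ (x, x - z)` -/
noncomputable def tau : (V × V) ≃ᵐ (V × V) where
  toFun := fun p => (p.1, p.1 - p.2)
  invFun := fun p => (p.1, p.1 - p.2)
  left_inv := fun p => by simp
  right_inv := fun p => by simp
  measurable_toFun := measurable_fst.prodMk (measurable_fst.sub measurable_snd)
  measurable_invFun := measurable_fst.prodMk (measurable_fst.sub measurable_snd)

lemma tau_mp : MeasurePreserving tau
    ((volume : Measure V).prod (volume : Measure V))
    ((volume : Measure V).prod (volume : Measure V)) := by
  have h := MeasurePreserving.skew_product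
    (MeasurePreserving.id (volume : Measure V))
    (g := fun x y => x - y)
    (measurable_fst.sub measurable_snd)
    (Eventually.of_forall fun x =>
      (Measure.measurePreserving_sub_left (volume : Measure V) x).map_eq)
  exact h

lemma integrable_B : Integrable (fun p : V × V => g p.1 * g (p.1 - p.2))
    ((volume : Measure V).prod (volume : Measure V)) := by
  have h : Integrable (fun q : V × V => g q.1 * g q.2)
      ((volume : Measure V).prod (volume : Measure V)) :=
    integrable_g.mul_prod integrable_g
  have := (tau_mp.integrable_comp_emb tau.measurableEmbedding).2 h
  exact this

lemma double_integral {M : ℝ} (hM : 0 < M) :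
    ∫ p : V × V, _root_.sinc (Real.sqrt M * ‖p.1 - p.2‖) ^ 2 ∂(stdGauss3.prod stdGauss3)
      = (1 - Real.exp (-(4*M))) / (4*M) := by
  set F : V → ℝ := fun z => _root_.sinc (Real.sqrt M * ‖z‖) ^ 2 with hF_def
  have hFmeas : Measurable F :=
    (measurable_sinc.comp (continuous_const.mul continuous_norm).measurable).pow_const 2
  have hF0 : ∀ z, 0 ≤ F z := fun z => sq_nonneg _
  have hF1 : ∀ z, F z ≤ 1 := fun z => sinc_sq_le_one _
  have hsub : Measurable fun p : V × V => p.1 - p.2 :=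
    measurable_fst.sub measurable_snd
  have hInt : Integrable (fun p : V × V => F (p.1 - p.2)) (stdGauss3.prod stdGauss3) := by
    refine (integrable_const (1:ℝ)).mono'
      ((hFmeas.comp hsub).aestronglyMeasurable) (Eventually.of_forall fun p => ?_)
    rw [Real.norm_eq_abs, _root_.abs_of_nonneg (hF0 _)]
    exact hF1 _
  rw [MeasureTheory.integral_prod _ hInt]
  have hinner : ∀ x : V, (∫ y, F (x - y) ∂stdGauss3) = ∫ z, g (x - z) * F z := by
    intro x
    rw [integral_stdGauss3]
    have := (Measure.measurePreserving_sub_left (volume : Measure V) x).integral_comp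
      (MeasurableEquiv.subLeft x).measurableEmbedding (fun y => g y * F (x - y))
    rw [← this]
    refine integral_congr_ae (Eventually.of_forall fun z => ?_)
    simp [sub_sub_cancel]
  have houter : (∫ x, (∫ y, F (x - y) ∂stdGauss3) ∂stdGauss3)
      = ∫ x : V, ∫ z : V, g x * (g (x - z) * F z) := by
    rw [integral_stdGauss3]
    refine integral_congr_ae (Eventually.of_forall fun x => ?_)
    show g x * (∫ y, F (x - y) ∂stdGauss3) = ∫ z : V, g x * (g (x - z) * F z)
    rw [hinner x, ← integral_const_mul]
  rw [houter]
  -- integrability on the product for swap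
  have hHmeas : AEStronglyMeasurable (Function.uncurry fun x z : V => g x * (g (x - z) * F z))
      ((volume : Measure V).prod (volume : Measure V)) := by
    have : Measurable fun p : V × V => g p.1 * (g (p.1 - p.2) * F p.2) :=
      (continuous_g.measurable.comp measurable_fst).mul
        ((continuous_g.measurable.comp hsub).mul (hFmeas.comp measurable_snd))
    exact this.aestronglyMeasurable
  have hHint : Integrable (Function.uncurry fun x z : V => g x * (g (x - z) * F z))
      ((volume : Measure V).prod (volume : Measure V)) := by
    refine integrable_B.mono' hHmeas (Eventually.of_forall fun p => ?_)
    obtain ⟨a, b⟩ := p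
    show ‖g a * (g (a - b) * F b)‖ ≤ g a * g (a - b)
    have h1 : 0 ≤ g a * (g (a - b) * F b) :=
      mul_nonneg (g_nonneg _) (mul_nonneg (g_nonneg _) (hF0 _))
    rw [Real.norm_eq_abs, _root_.abs_of_nonneg h1]
    have h2 := g_nonneg a
    have h3 := g_nonneg (a - b)
    have hstep := mul_le_mul_of_nonneg_left (mul_le_mul_of_nonneg_left (hF1 b) h3) h2
    simpa using hstep
  rw [integral_integral_swap hHint]
  have hin2 : ∀ z : V, (∫ x : V, g x * (g (x - z) * F z))
      = ((2*π) ^ (-(3:ℝ)/2))^2 * π ^ ((3:ℝ)/2) * (F z * Real.exp (-‖z‖^2/4)) := by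
    intro z
    have : ∀ x : V, g x * (g (x - z) * F z) = (g x * g (x - z)) * F z := fun x => by ring
    rw [integral_congr_ae (Eventually.of_forall this), integral_mul_const,
      integral_g_mul_g_sub]
    ring
  rw [integral_congr_ae (Eventually.of_forall hin2), integral_const_mul]
  have : ∫ z : V, F z * Real.exp (-‖z‖^2/4)
      = 2 * π * Real.sqrt π * (1 - Real.exp (-(4 * M))) / M := radial_integral hM
  rw [this]
  have hre : ((2*π:ℝ) ^ (-(3:ℝ)/2))^2 * π ^ ((3:ℝ)/2) * (2 * π * Real.sqrt π * (1 - Real.exp (-(4*M))) / M)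
      = (((2*π:ℝ) ^ (-(3:ℝ)/2))^2 * π ^ ((3:ℝ)/2) * (2 * π * Real.sqrt π)) * ((1 - Real.exp (-(4*M))) / M) := by
    ring
  rw [hre, const_final]
  ring

lemma map_pair {N : ℕ} (i j : Fin N) (hij : i ≠ j) :
    Measure.map (fun x : Fin N → V => (x i, x j)) (Measure.pi fun _ => stdGauss3)
      = stdGauss3.prod stdGauss3 := by
  have hmeas : Measurable (fun x : Fin N → V => (x i, x j)) :=
    (measurable_pi_apply i).prodMk (measurable_pi_apply j)
  refine (Measure.prod_eq fun s t hs ht => ?_).symm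
  rw [Measure.map_apply hmeas (hs.prod ht)]
  have hpre : (fun x : Fin N → V => (x i, x j)) ⁻¹' (s ×ˢ t)
      = Set.pi Set.univ (Function.update (Function.update (fun _ : Fin N => (Set.univ : Set V)) i s) j t) := by
    ext x
    simp only [Set.mem_preimage, Set.mem_prod, Set.mem_univ_pi, Function.update_apply]
    constructor
    · rintro ⟨h1, h2⟩ k
      split_ifs with hkj hki
      · subst hkj; exact h2
      · subst hki; exact h1
      · exact Set.mem_univ _
    · intro hx
      constructor
      · have := hx i
        simp only [hij, if_false, if_pos rfl] at this
        exact this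
      · have := hx j
        simp only [if_pos rfl] at this
        exact this
  rw [hpre, Measure.pi_pi]
  have hterm : ∀ k : Fin N,
      stdGauss3 ((Function.update (Function.update (fun _ : Fin N => (Set.univ : Set V)) i s) j t) k)
      = Function.update (Function.update (fun _ : Fin N => (1 : ℝ≥0∞)) i (stdGauss3 s)) j (stdGauss3 t) k := by
    intro k
    by_cases hkj : k = j
    · subst hkj; simp [Function.update_apply]
    · by_cases hki : k = i
      · subst hki; simp [Function.update_apply, hkj]
      · simp [Function.update_apply, hkj, hki]
  rw [Finset.prod_congr rfl (fun k _ => hterm k),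
    Finset.prod_update_of_mem (Finset.mem_univ j)]
  have hi_mem : i ∈ Finset.univ \ {j} := by
    simp [Finset.mem_sdiff, hij]
  rw [Finset.prod_update_of_mem hi_mem]
  simp [mul_comm]

lemma integral_pair {N : ℕ} (i j : Fin N) (hij : i ≠ j) (f : V × V → ℝ) (hf : Measurable f) :
    ∫ x : Fin N → V, f (x i, x j) ∂(Measure.pi fun _ => stdGauss3)
      = ∫ p, f p ∂(stdGauss3.prod stdGauss3) := by
  have hmeas : Measurable (fun x : Fin N → V => (x i, x j)) :=
    (measurable_pi_apply i).prodMk (measurable_pi_apply j)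
  rw [← map_pair i j hij, integral_map hmeas.aemeasurable hf.aestronglyMeasurable]

lemma Jv_eq {M : ℝ} (hM : 0 < M) :
    Real.exp (-2 * M) * Real.sinh (2 * M) / (2 * M) = (1 - Real.exp (-(4*M))) / (4*M) := by
  rw [Real.sinh_eq]
  have h1 : Real.exp (-2*M) * Real.exp (2*M) = 1 := by
    rw [← Real.exp_add]; norm_num
  have h2 : Real.exp (-2*M) * Real.exp (-(2*M)) = Real.exp (-(4*M)) := by
    rw [← Real.exp_add]; ring_nf
  have key : Real.exp (-2*M) * (Real.exp (2*M) - Real.exp (-(2*M))) = 1 - Real.exp (-(4*M)) := by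
    rw [mul_sub, h1, h2]
  calc Real.exp (-2*M) * ((Real.exp (2*M) - Real.exp (-(2*M)))/2) / (2*M)
      = (Real.exp (-2*M) * (Real.exp (2*M) - Real.exp (-(2*M)))) / (4*M) := by ring
    _ = (1 - Real.exp (-(4*M))) / (4*M) := by rw [key]

end TrSsq

theorem mean_normalized_trace_S_squared :
    (∀ (N : ℕ), 1 ≤ N → ∀ M : ℝ, 0 < M →
      ∫ x : Fin N → EuclideanSpace ℝ (Fin 3),
          (1 / (N : ℝ)) *
            Matrix.trace ((Matrix.of fun i j => _root_.sinc (Real.sqrt M * ‖x i - x j‖)) ^ 2)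
          ∂(Measure.pi fun _ => stdGauss3) =
        1 + ((N : ℝ) - 1) * Real.exp (-2 * M) * Real.sinh (2 * M) / (2 * M)) ∧
    (∀ b₀ : ℝ, 0 < b₀ →
      Tendsto (fun N : ℕ =>
          1 + ((N : ℝ) - 1) * Real.exp (-2 * ((N : ℝ) / b₀)) *
            Real.sinh (2 * ((N : ℝ) / b₀)) / (2 * ((N : ℝ) / b₀)))
        atTop (nhds (1 + b₀ / 4))) := by
  constructor
  · intro N hN M hM
    have hNne : ((N:ℝ)) ≠ 0 := by
      have : (0:ℝ) < (N:ℝ) := by exact_mod_cast Nat.lt_of_lt_of_le Nat.zero_lt_one hN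
      exact this.ne'
    set Jv : ℝ := (1 - Real.exp (-(4*M)))/(4*M) with hJv_def
    have htr : ∀ x : Fin N → TrSsq.V,
        Matrix.trace ((Matrix.of fun i j => _root_.sinc (Real.sqrt M * ‖x i - x j‖)) ^ 2)
          = ∑ i : Fin N, ∑ j : Fin N, _root_.sinc (Real.sqrt M * ‖x i - x j‖) ^ 2 := by
      intro x
      have hsymm : ∀ i j : Fin N,
          _root_.sinc (Real.sqrt M * ‖x j - x i‖) = _root_.sinc (Real.sqrt M * ‖x i - x j‖) := by
        intro i j; rw [norm_sub_rev]
      rw [sq, Matrix.trace]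
      refine Finset.sum_congr rfl fun i _ => ?_
      rw [Matrix.diag_apply, Matrix.mul_apply]
      refine Finset.sum_congr rfl fun j _ => ?_
      rw [Matrix.of_apply, Matrix.of_apply, hsymm i j, ← sq]
    have hterm_meas : ∀ i j : Fin N,
        Measurable fun x : Fin N → TrSsq.V => _root_.sinc (Real.sqrt M * ‖x i - x j‖) ^ 2 := by
      intro i j
      exact (TrSsq.measurable_sinc.comp
        ((((measurable_pi_apply i).sub (measurable_pi_apply j)).norm).const_mul
          (Real.sqrt M))).pow_const 2
    have hterm_int : ∀ i j : Fin N,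
        Integrable (fun x : Fin N → TrSsq.V => _root_.sinc (Real.sqrt M * ‖x i - x j‖) ^ 2)
          (Measure.pi fun _ => stdGauss3) := by
      intro i j
      refine (integrable_const (1:ℝ)).mono' (hterm_meas i j).aestronglyMeasurable
        (Eventually.of_forall fun x => ?_)
      rw [Real.norm_eq_abs, _root_.abs_of_nonneg (sq_nonneg _)]
      exact TrSsq.sinc_sq_le_one _
    have hstep : (∫ x : Fin N → TrSsq.V,
        Matrix.trace ((Matrix.of fun i j => _root_.sinc (Real.sqrt M * ‖x i - x j‖)) ^ 2)
        ∂(Measure.pi fun _ => stdGauss3))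
      = ∫ x : Fin N → TrSsq.V, (∑ i : Fin N, ∑ j : Fin N, _root_.sinc (Real.sqrt M * ‖x i - x j‖) ^ 2)
        ∂(Measure.pi fun _ => stdGauss3) := integral_congr_ae (Eventually.of_forall htr)
    rw [MeasureTheory.integral_const_mul, hstep]
    rw [integral_finset_sum Finset.univ
      (fun i _ => integrable_finset_sum Finset.univ (fun j _ => hterm_int i j))]
    rw [Finset.sum_congr rfl (fun i _ =>
      integral_finset_sum Finset.univ (fun j _ => hterm_int i j))]
    have hval : ∀ i j : Fin N,
        (∫ x : Fin N → TrSsq.V, _root_.sinc (Real.sqrt M * ‖x i - x j‖) ^ 2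
            ∂(Measure.pi fun _ => stdGauss3))
          = if i = j then 1 else Jv := by
      intro i j
      by_cases hij : i = j
      · subst hij
        rw [if_pos rfl]
        have : ∀ x : Fin N → TrSsq.V, _root_.sinc (Real.sqrt M * ‖x i - x i‖) ^ 2 = 1 := by
          intro x
          rw [sub_self, norm_zero, mul_zero, TrSsq.sinc_zero, one_pow]
        rw [integral_congr_ae (Eventually.of_forall this)]
        simp
      · rw [if_neg hij]
        have h := TrSsq.integral_pair i j hij
          (fun p => _root_.sinc (Real.sqrt M * ‖p.1 - p.2‖) ^ 2)
          ((TrSsq.measurable_sinc.comp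
            (((measurable_fst.sub measurable_snd).norm).const_mul (Real.sqrt M))).pow_const 2)
        rw [hJv_def]
        rw [← TrSsq.double_integral hM]
        exact h
    rw [Finset.sum_congr rfl fun i _ => Finset.sum_congr rfl fun j _ => hval i j]
    have hsum_inner : ∀ i : Fin N,
        (∑ j : Fin N, if i = j then (1:ℝ) else Jv) = (N:ℝ) * Jv + (1 - Jv) := by
      intro i
      have hsplit : ∀ j : Fin N, (if i = j then (1:ℝ) else Jv)
          = Jv + (if i = j then 1 - Jv else 0) := by
        intro j; split_ifs <;> ring
      rw [Finset.sum_congr rfl fun j _ => hsplit j, Finset.sum_add_distrib,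
        Finset.sum_const, Finset.sum_ite_eq]
      simp [Finset.card_univ, nsmul_eq_mul]
    rw [Finset.sum_congr rfl fun i _ => hsum_inner i, Finset.sum_const,
      Finset.card_univ, Fintype.card_fin, nsmul_eq_mul]
    have hrhs : ((N:ℝ) - 1) * Real.exp (-2 * M) * Real.sinh (2 * M) / (2 * M)
        = ((N:ℝ) - 1) * Jv := by
      have h1 : ((N:ℝ) - 1) * Real.exp (-2 * M) * Real.sinh (2 * M) / (2 * M)
          = ((N:ℝ) - 1) * (Real.exp (-2 * M) * Real.sinh (2 * M) / (2 * M)) := by ring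
      rw [h1, TrSsq.Jv_eq hM, hJv_def]
    rw [hrhs]
    field_simp
    ring
  · intro b₀ hb₀
    have hev : ∀ᶠ N : ℕ in atTop,
        (1:ℝ) + ((N:ℝ) - 1) * Real.exp (-2 * ((N:ℝ) / b₀)) *
            Real.sinh (2 * ((N:ℝ) / b₀)) / (2 * ((N:ℝ) / b₀))
          = 1 + b₀/4 * ((1 - 1/(N:ℝ)) * (1 - Real.exp (-(4 * ((N:ℝ) / b₀))))) := by
      filter_upwards [eventually_ge_atTop 1] with N hN
      have hN0 : (0:ℝ) < (N:ℝ) := by exact_mod_cast Nat.lt_of_lt_of_le Nat.zero_lt_one hN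
      have hm : (0:ℝ) < (N:ℝ) / b₀ := div_pos hN0 hb₀
      have key := TrSsq.Jv_eq hm
      have h1 : ((N:ℝ) - 1) * Real.exp (-2 * ((N:ℝ) / b₀)) *
            Real.sinh (2 * ((N:ℝ) / b₀)) / (2 * ((N:ℝ) / b₀))
          = ((N:ℝ) - 1) * (Real.exp (-2 * ((N:ℝ) / b₀)) *
            Real.sinh (2 * ((N:ℝ) / b₀)) / (2 * ((N:ℝ) / b₀))) := by ring
      rw [h1, key]
      have hb₀ne : b₀ ≠ 0 := hb₀.ne'
      have hNne : (N:ℝ) ≠ 0 := hN0.ne'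
      field_simp
    refine Tendsto.congr' (hev.mono fun N h => h.symm) ?_
    have h1 : Tendsto (fun N : ℕ => 1/(N:ℝ)) atTop (nhds 0) :=
      tendsto_one_div_atTop_nhds_zero_nat
    have h2 : Tendsto (fun N : ℕ => Real.exp (-(4 * ((N:ℝ) / b₀)))) atTop (nhds 0) := by
      refine Real.tendsto_exp_atBot.comp ?_
      refine tendsto_neg_atTop_atBot.comp ?_
      exact (tendsto_natCast_atTop_atTop.atTop_div_const hb₀).const_mul_atTop (by norm_num)
    have hmain : Tendsto (fun N : ℕ =>
        (1:ℝ) + b₀/4 * ((1 - 1/(N:ℝ)) * (1 - Real.exp (-(4 * ((N:ℝ) / b₀))))))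
        atTop (nhds (1 + b₀/4 * ((1 - 0) * (1 - 0)))) := by
      exact tendsto_const_nhds.add (tendsto_const_nhds.mul
        ((tendsto_const_nhds.sub h1).mul (tendsto_const_nhds.sub h2)))
    have : (1:ℝ) + b₀/4 * ((1 - 0) * (1 - 0)) = 1 + b₀/4 := by ring
    rwa [this] at hmain
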